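/- Let n ≥ 1, let 2m > 0 be an even integer, and let t ∈ E^× with t ∈ 𝔭_E^{−m}. For k' ∈ U(W) acting on 𝕎 by k'·(v⊗w) = v⊗(k'w): (i) if k' ∈ K_{2m}^W then φ_{t,f_n}(k'^{−1}u) = φ_{t,f_n}(u) for all u ∈ 𝕎; (ii) if k' ∈ ᵗK_{2m}^W = {ᵗg : g ∈ K_{2m}^W} then φ_{t,f_{−n}}(k'^{−1}u) = φ_{t,f_{−n}}(u) for all u ∈ 𝕎. -/

import Mathlib

open Matrix MeasureTheory
open scoped Classical

noncomputable section

namespace Newforms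

variable {E : Type} [Field E]

/-- The subset `𝔭_E^m ⊆ E` for `m : ℤ`, where `𝔭_E = ϖ 𝔬_E`. -/
def Ppow (O : Subring E) (ϖ : E) (m : ℤ) : Set E :=
  {x : E | ∃ y ∈ O, x = ϖ ^ m * y}

/-- `w_k`: the antidiagonal `k × k` matrix with all antidiagonal entries `1`. -/
def wMat (E : Type) [Field E] (k : ℕ) : Matrix (Fin k) (Fin k) E :=
  fun i j => if (i : ℕ) + (j : ℕ) + 1 = k then 1 else 0

/-- `J_{2n} = [[0, wₙ],[−wₙ,0]]`. -/
def Jmat (E : Type) [Field E] (n : ℕ) : Matrix (Fin (2 * n)) (Fin (2 * n)) E :=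
  fun i j => if (i : ℕ) + (j : ℕ) + 1 = 2 * n then (if (i : ℕ) < n then (1 : E) else -1) else 0

/-- The quasi-split even unitary group `U_{2n}`, as a set of matrices:
`ᵗḡ J_{2n} g = J_{2n}`. -/
def USet (σ : E ≃+* E) (n : ℕ) : Set (Matrix (Fin (2 * n)) (Fin (2 * n)) E) :=
  {g | (g.map σ)ᵀ * Jmat E n * g = Jmat E n}

/-- The quasi-split odd unitary group `U_{2n+1}`: `ᵗh̄ w_{2n+1} h = w_{2n+1}`. -/
def UOddSet (σ : E ≃+* E) (n : ℕ) : Set (Matrix (Fin (2 * n + 1)) (Fin (2 * n + 1)) E) :=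
  {h | (h.map σ)ᵀ * wMat E (2 * n + 1) * h = wMat E (2 * n + 1)}

/-- The congruence (shape) conditions defining `K_{2m}^W` inside `U_{2n}`. -/
def KWshape (O : Subring E) (ϖ : E) (n m : ℕ) :
    Set (Matrix (Fin (2 * n)) (Fin (2 * n)) E) :=
  {g | (∀ i j, g i j ∈ O) ∧
    ∀ i j : Fin (2 * n),
      ((i : ℕ) = 0 ∧ (j : ℕ) = 0 → g i j - 1 ∈ Ppow O ϖ m) ∧
      (0 < (i : ℕ) ∧ (i : ℕ) < 2 * n - 1 ∧ (j : ℕ) = 0 → g i j ∈ Ppow O ϖ m) ∧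
      ((i : ℕ) = 2 * n - 1 ∧ (j : ℕ) = 0 → g i j ∈ Ppow O ϖ (2 * m)) ∧
      ((i : ℕ) = 2 * n - 1 ∧ 0 < (j : ℕ) ∧ (j : ℕ) < 2 * n - 1 → g i j ∈ Ppow O ϖ m) ∧
      ((i : ℕ) = 2 * n - 1 ∧ (j : ℕ) = 2 * n - 1 → g i j - 1 ∈ Ppow O ϖ m)}

/-- The compact open subgroup `K_{2m}^W ⊆ U_{2n}`. -/
def KW (σ : E ≃+* E) (O : Subring E) (ϖ : E) (n m : ℕ) :
    Set (Matrix (Fin (2 * n)) (Fin (2 * n)) E) :=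
  KWshape O ϖ n m ∩ USet σ n

/-- The congruence (shape) conditions defining `K_{2m}^V` inside `U_{2n+1}`. -/
def KVshape (O : Subring E) (ϖ : E) (n m : ℕ) :
    Set (Matrix (Fin (2 * n + 1)) (Fin (2 * n + 1)) E) :=
  {h | (∀ i j, h i j ∈ O) ∧
    (∀ i j : Fin (2 * n + 1),
      (((i : ℕ) = n ∧ (j : ℕ) ≠ n) ∨ ((i : ℕ) ≠ n ∧ (j : ℕ) = n) → h i j ∈ Ppow O ϖ m)) ∧
    (∀ i j : Fin (2 * n + 1), (i : ℕ) = n ∧ (j : ℕ) = n → h i j - 1 ∈ Ppow O ϖ (2 * m))}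

/-- The compact open subgroup `K_{2m}^V ⊆ U_{2n+1}`. -/
def KV (σ : E ≃+* E) (O : Subring E) (ϖ : E) (n m : ℕ) :
    Set (Matrix (Fin (2 * n + 1)) (Fin (2 * n + 1)) E) :=
  KVshape O ϖ n m ∩ UOddSet σ n

/-- The shape conditions for `J_{2m}^V` (central entry in `1 + 𝔭_E^m`). -/
def JVshape (O : Subring E) (ϖ : E) (n m : ℕ) :
    Set (Matrix (Fin (2 * n + 1)) (Fin (2 * n + 1)) E) :=
  {h | (∀ i j, h i j ∈ O) ∧
    (∀ i j : Fin (2 * n + 1),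
      (((i : ℕ) = n ∧ (j : ℕ) ≠ n) ∨ ((i : ℕ) ≠ n ∧ (j : ℕ) = n) → h i j ∈ Ppow O ϖ m)) ∧
    (∀ i j : Fin (2 * n + 1), (i : ℕ) = n ∧ (j : ℕ) = n → h i j - 1 ∈ Ppow O ϖ m)}

/-- `x w_k ᵗȳ = Σᵢ xᵢ σ(y_{k-1-i})` for row vectors `x, y ∈ E^k`. -/
def pairW (σ : E ≃+* E) {k : ℕ} (x y : Fin k → E) : E :=
  ∑ i, x i * σ (y i.rev)

/-- `ψ_E(x) = ψ((x + x̄)/2)`. -/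
def psiE (σ : E ≃+* E) (ψ : E → ℂ) (x : E) : ℂ := ψ ((x + σ x) / 2)

def idx0 (k : ℕ) : Fin (2 * (k + 1)) := ⟨0, by omega⟩
def idxLast (k : ℕ) : Fin (2 * (k + 1)) := ⟨2 * k + 1, by omega⟩
def bX {k : ℕ} (i : Fin k) : Fin (2 * (k + 1)) := ⟨(i : ℕ) + 1, by have := i.isLt; omega⟩
def bY {k : ℕ} (i : Fin k) : Fin (2 * (k + 1)) := ⟨(i : ℕ) + (k + 1), by have := i.isLt; omega⟩
def midIdx {k : ℕ} (i : Fin (2 * k)) : Fin (2 * (k + 1)) :=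
  ⟨(i : ℕ) + 1, by have := i.isLt; omega⟩

/-- The Heisenberg element `𝐯(x,y;z) ∈ U_{2n}` (here `n = k+1` and `x, y ∈ E^{n-1} = E^k`). -/
def vMat (σ : E ≃+* E) (k : ℕ) (x y : Fin k → E) (z : E) :
    Matrix (Fin (2 * (k + 1))) (Fin (2 * (k + 1))) E :=
  1 + (∑ i, Matrix.single (idx0 k) (bX i) (x i))
    + (∑ i, Matrix.single (idx0 k) (bY i) (y i))
    + (∑ i, Matrix.single (bX i) (idxLast k) (σ (y i.rev)))
    + (∑ i, Matrix.single (bY i) (idxLast k) (-σ (x i.rev)))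
    + Matrix.single (idx0 k) (idxLast k) (z + (pairW σ x y - pairW σ y x) / 2)

/-- The Heisenberg group `H_{n-1} = {𝐯(x,y;z) | x, y ∈ E^{n-1}, z ∈ F}` (with `n = k+1`). -/
def Hset (σ : E ≃+* E) (k : ℕ) : Set (Matrix (Fin (2 * (k + 1))) (Fin (2 * (k + 1))) E) :=
  {g | ∃ x y : Fin k → E, ∃ z : E, σ z = z ∧ g = vMat σ k x y z}

/-- The embedding `U_{2n-2} → U_{2n}, g' ↦ diag(1, g', 1)` (here `n = k+1`). -/
def iotaU (k : ℕ) (g : Matrix (Fin (2 * k)) (Fin (2 * k)) E) :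
    Matrix (Fin (2 * (k + 1))) (Fin (2 * (k + 1))) E :=
  Matrix.single (idx0 k) (idx0 k) 1
    + Matrix.single (idxLast k) (idxLast k) 1
    + ∑ i, ∑ j, Matrix.single (midIdx i) (midIdx j) (g i j)

/-- `d_t = diag(t, 1_{2n-2}, t̄⁻¹)`. -/
def dtW (σ : E ≃+* E) (n : ℕ) (t : E) : Matrix (Fin (2 * n)) (Fin (2 * n)) E :=
  Matrix.diagonal fun i =>
    if (i : ℕ) = 0 then t else if (i : ℕ) = 2 * n - 1 then (σ t)⁻¹ else 1

/-- `diag(ϖ^{-m}, 1_{2n-2}, ϖ^m)`. -/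
def dWmat (ϖ : E) (n : ℕ) (m : ℤ) : Matrix (Fin (2 * n)) (Fin (2 * n)) E :=
  Matrix.diagonal fun i =>
    if (i : ℕ) = 0 then ϖ ^ (-m) else if (i : ℕ) = 2 * n - 1 then ϖ ^ m else 1

/-- `diag(ϖ^{-m}·1_n, 1, ϖ^m·1_n)`. -/
def dVmat (ϖ : E) (n : ℕ) (m : ℤ) : Matrix (Fin (2 * n + 1)) (Fin (2 * n + 1)) E :=
  Matrix.diagonal fun i =>
    if (i : ℕ) < n then ϖ ^ (-m) else if (i : ℕ) = n then 1 else ϖ ^ m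

/-- The span of `{π(𝐯(0,0;z)) v − χ(z) v}`: the kernel of `π ↠ π_χ`. -/
def FJkernel (σ : E ≃+* E) (k : ℕ) {V : Type} [AddCommGroup V] [Module ℂ V]
    (π : Matrix (Fin (2 * (k + 1))) (Fin (2 * (k + 1))) E → (V →ₗ[ℂ] V)) (χ : E → ℂ) :
    Submodule ℂ V :=
  Submodule.span ℂ {w | ∃ z : E, σ z = z ∧ ∃ v : V, w = π (vMat σ k 0 0 z) v - χ z • v}

/-- The submodule `π^K` of `K`-fixed vectors. -/
def fixedSub {V : Type} [AddCommGroup V] [Module ℂ V] {α : Type}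
    (π : α → (V →ₗ[ℂ] V)) (K : Set α) : Submodule ℂ V where
  carrier := {v | ∀ g ∈ K, π g v = v}
  add_mem' := by
    intro a b ha hb g hg
    rw [map_add, ha g hg, hb g hg]
  zero_mem' := by
    intro g hg
    exact map_zero _
  smul_mem' := by
    intro c v hv g hg
    rw [_root_.map_smul, hv g hg]

/-- The skew-hermitian form on `W = E^{2n}` in the basis `f_n, …, f_1, f_{-1}, …, f_{-n}`. -/
def formW (σ : E ≃+* E) (n : ℕ) (u v : Fin (2 * n) → E) : E :=
  ∑ i : Fin (2 * n), σ (u i) * v i.rev * (if (i : ℕ) < n then 1 else -1)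

/-- The lattice `(⊕_{i≠0} 𝔬_E e_i) ⊕ 𝔭_E^m e_0` in `V = E^{2n+1}` (coordinate `n` is `e_0`). -/
def MVlat (O : Subring E) (ϖ : E) (n : ℕ) (m : ℤ) : Set (Fin (2 * n + 1) → E) :=
  {u | (∀ i : Fin (2 * n + 1), (i : ℕ) ≠ n → u i ∈ O) ∧
       ∀ i : Fin (2 * n + 1), (i : ℕ) = n → u i ∈ Ppow O ϖ m}

/-- The lattice `(⊕_{i≠-n} 𝔬_E f_i) ⊕ 𝔭_E^m f_{-n}` in `W = E^{2n}`
(coordinate `2n-1` is `f_{-n}`). -/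
def NWlat (O : Subring E) (ϖ : E) (n : ℕ) (m : ℤ) : Set (Fin (2 * n) → E) :=
  {u | (∀ i : Fin (2 * n), (i : ℕ) ≠ 2 * n - 1 → u i ∈ O) ∧
       ∀ i : Fin (2 * n), (i : ℕ) = 2 * n - 1 → u i ∈ Ppow O ϖ m}

/-- The lattice `𝔭_E^m f_n ⊕ (⊕_{i≠n} 𝔬_E f_i)` in `W = E^{2n}` (coordinate `0` is `f_n`). -/
def NWdual (O : Subring E) (ϖ : E) (n : ℕ) (m : ℤ) : Set (Fin (2 * n) → E) :=
  {u | (∀ i : Fin (2 * n), (i : ℕ) ≠ 0 → u i ∈ O) ∧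
       ∀ i : Fin (2 * n), (i : ℕ) = 0 → u i ∈ Ppow O ϖ m}

/-- `𝕎 = V ⊗_E W` realized as `(2n+1) × 2n` matrices via the bases `(e_i)` and `(f_j)`;
this is `⟨T, T'⟩_V ⊗ ⟨,⟩_W`-pairing before taking the trace to `F`. -/
def formVW (σ : E ≃+* E) (n : ℕ) (T T' : Matrix (Fin (2 * n + 1)) (Fin (2 * n)) E) : E :=
  ∑ i, ∑ j, σ (T i j) * T' i.rev j.rev * (if (j : ℕ) < n then 1 else -1)

/-- The symplectic `F`-bilinear form `⟨v⊗w, v'⊗w'⟩ = tr_{E/F}(⟨v,v'⟩_V ⟨w,w'⟩_W)` on `𝕎`. -/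
def sympForm (σ : E ≃+* E) (n : ℕ) (T T' : Matrix (Fin (2 * n + 1)) (Fin (2 * n)) E) : E :=
  formVW σ n T T' + σ (formVW σ n T T')

/-- The self-dual lattice `A = Γ_V ⊗ Γ_W ⊆ 𝕎`. -/
def ASet (O : Subring E) (n : ℕ) : Set (Matrix (Fin (2 * n + 1)) (Fin (2 * n)) E) :=
  {T | ∀ i j, T i j ∈ O}

/-- The Weyl-type element `w_{1,n-1} ∈ U_{2n}` (here `n = k+1`). -/
def w1Mat (E : Type) [Field E] (k : ℕ) : Matrix (Fin (2 * (k + 1))) (Fin (2 * (k + 1))) E :=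
  (∑ i : Fin k, Matrix.single (⟨(i : ℕ), by have := i.isLt; omega⟩ : Fin (2 * (k + 1)))
      ⟨(i : ℕ) + 1, by have := i.isLt; omega⟩ 1)
  + Matrix.single (⟨k, by omega⟩ : Fin (2 * (k + 1))) ⟨0, by omega⟩ 1
  + Matrix.single (⟨k + 1, by omega⟩ : Fin (2 * (k + 1))) ⟨2 * k + 1, by omega⟩ 1
  + (∑ i : Fin k, Matrix.single
      (⟨k + 2 + (i : ℕ), by have := i.isLt; omega⟩ : Fin (2 * (k + 1)))
      ⟨k + 1 + (i : ℕ), by have := i.isLt; omega⟩ 1)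

/-- `𝐦(a) = diag(1, a, w_{n-1} ᵗā⁻¹ w_{n-1}⁻¹, 1) ∈ U_{2n}` (here `n = k+1`). -/
def mMatBig (σ : E ≃+* E) (k : ℕ) (a : Matrix (Fin k) (Fin k) E) :
    Matrix (Fin (2 * (k + 1))) (Fin (2 * (k + 1))) E :=
  Matrix.single (idx0 k) (idx0 k) 1
    + Matrix.single (idxLast k) (idxLast k) 1
    + (∑ i, ∑ j, Matrix.single (bX i) (bX j) (a i j))
    + (∑ i, ∑ j, Matrix.single (bY i) (bY j)
        ((wMat E k * ((a⁻¹).map σ)ᵀ * (wMat E k)⁻¹) i j))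

/-- The unipotent element `g_u` with `ᵗu` in block position `(1,2)` and `−ū w_{n-1}` in block
position `(3,4)` (block sizes `(n-1,1,1,n-1)`, `n = k+1`). -/
def gUMat (σ : E ≃+* E) (k : ℕ) (u : Fin k → E) :
    Matrix (Fin (2 * (k + 1))) (Fin (2 * (k + 1))) E :=
  1 + (∑ i : Fin k, Matrix.single
        (⟨(i : ℕ), by have := i.isLt; omega⟩ : Fin (2 * (k + 1))) ⟨k, by omega⟩ (u i))
    + (∑ j : Fin k, Matrix.single (⟨k + 1, by omega⟩ : Fin (2 * (k + 1)))
        ⟨k + 2 + (j : ℕ), by have := j.isLt; omega⟩ (-σ (u j.rev)))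

/-- The pure tensor `e_0 ⊗ w ∈ 𝕎` in matrix coordinates. -/
def e0tensor {E : Type} [Field E] (n : ℕ) (w : Fin (2 * n) → E) :
    Matrix (Fin (2 * n + 1)) (Fin (2 * n)) E :=
  fun i j => if (i : ℕ) = n then w j else 0

/-- The lattice-model function `φ_{t,w}`, supported on `A + t e_0 ⊗ w` with
`φ_{t,w}(a + t e_0 ⊗ w) = ψ(−½⟨a, t e_0 ⊗ w⟩)`. -/
def phiTW (σ : E ≃+* E) (O : Subring E) (ψ : E → ℂ) (n : ℕ) (t : E) (w : Fin (2 * n) → E)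
    (u : Matrix (Fin (2 * n + 1)) (Fin (2 * n)) E) : ℂ :=
  if (∀ i j, (u - t • e0tensor n w) i j ∈ O) then
    ψ (-sympForm σ n (u - t • e0tensor n w) (t • e0tensor n w) / 2)
  else 0

/-- `K_0^W = U_{2n} ∩ GL_{2n}(𝔬_E)`. -/
def K0Set (σ : E ≃+* E) (O : Subring E) (n : ℕ) :
    Set (Matrix (Fin (2 * n)) (Fin (2 * n)) E) :=
  {g | g ∈ USet σ n ∧ ∀ i j, g i j ∈ O}

/-- `Y ⊆ E^{2n}`: the span of the first `n` coordinates. -/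
def YSet (E : Type) [Field E] (n : ℕ) : Set (Fin (2 * n) → E) :=
  {v | ∀ i : Fin (2 * n), n ≤ (i : ℕ) → v i = 0}

/-- The Siegel parabolic `Q_{2n} = {g ∈ U_{2n} : g Y = Y}`. -/
def QSet (σ : E ≃+* E) (n : ℕ) : Set (Matrix (Fin (2 * n)) (Fin (2 * n)) E) :=
  {g | g ∈ USet σ n ∧ (fun v => g.mulVec v) '' YSet E n = YSet E n}

/-- `K_S`: elements of `K_0^W` whose lower-left `n × n` block has entries in `𝔭_E`. -/
def KSSet (σ : E ≃+* E) (O : Subring E) (ϖ : E) (n : ℕ) :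
    Set (Matrix (Fin (2 * n)) (Fin (2 * n)) E) :=
  {g | g ∈ K0Set σ O n ∧
    ∀ i j : Fin (2 * n), n ≤ (i : ℕ) → (j : ℕ) < n → g i j ∈ Ppow O ϖ 1}

/-- `K_M`: elements of `K_0^W` with blocks `(2,1)`, `(3,1)`, `(3,2)` (block sizes
`(1, 2n-2, 1)`) having entries in `𝔭_E`. -/
def KMSet (σ : E ≃+* E) (O : Subring E) (ϖ : E) (n : ℕ) :
    Set (Matrix (Fin (2 * n)) (Fin (2 * n)) E) :=
  {g | g ∈ K0Set σ O n ∧ ∀ i j : Fin (2 * n),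
      ((0 < (i : ℕ) ∧ (j : ℕ) = 0) ∨ ((i : ℕ) = 2 * n - 1 ∧ (j : ℕ) < 2 * n - 1)) →
      g i j ∈ Ppow O ϖ 1}

/-- The Schwartz space `𝒮(E^k)` of locally constant compactly supported functions, as a
`ℂ`-submodule of all functions. -/
def SMod (E : Type) [Field E] [TopologicalSpace E] (k : ℕ) :
    Submodule ℂ ((Fin k → E) → ℂ) where
  carrier := {f | (∀ ξ, ∃ U ∈ nhds ξ, ∀ η ∈ U, f η = f ξ) ∧
                  ∃ C : Set (Fin k → E), IsCompact C ∧ ∀ ξ ∉ C, f ξ = 0}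
  add_mem' := by
    rintro f g ⟨hf1, Cf, hCf, hf2⟩ ⟨hg1, Cg, hCg, hg2⟩
    refine ⟨fun ξ => ?_, Cf ∪ Cg, hCf.union hCg, fun ξ hξ => ?_⟩
    · obtain ⟨U, hU, hUf⟩ := hf1 ξ
      obtain ⟨Vv, hV, hVg⟩ := hg1 ξ
      exact ⟨U ∩ Vv, Filter.inter_mem hU hV, fun η hη => by
        simp only [Pi.add_apply, hUf η hη.1, hVg η hη.2]⟩
    · simp only [Pi.add_apply, hf2 ξ (fun h => hξ (Set.mem_union_left _ h)),
        hg2 ξ (fun h => hξ (Set.mem_union_right _ h)), add_zero]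
  zero_mem' := by
    refine ⟨fun ξ => ⟨Set.univ, Filter.univ_mem, fun η _ => rfl⟩,
      ∅, isCompact_empty, fun ξ _ => rfl⟩
  smul_mem' := by
    rintro c f ⟨hf1, Cf, hCf, hf2⟩
    refine ⟨fun ξ => ?_, Cf, hCf, fun ξ hξ => ?_⟩
    · obtain ⟨U, hU, hUf⟩ := hf1 ξ
      exact ⟨U, hU, fun η hη => by simp only [Pi.smul_apply, hUf η hη]⟩
    · simp only [Pi.smul_apply, hf2 ξ hξ, smul_zero]

end Newforms

/-! The action of `k'` only moves the `W`-coordinates, and `φ_{t,f}` with `f = f_{j₀}` sees a point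
`u` only through `u - t e₀ ⊗ f` modulo `A` and through one coordinate of it. For `h = k'⁻¹`,
`u hᵀ - u = u (h - 1)ᵀ`; the congruences defining `K_{2m}^W` (transported to `h` by the explicit
inverse `h = -J ḡᵀ J` of a unitary matrix) make this difference lie in `A` and change the phase
`⟨u - t e₀ ⊗ f, t e₀ ⊗ f⟩` only by `t · 𝔭_E^m + t t̄ · 𝔭_E^{2m} ⊆ 𝔬_E`, on which `ψ` is trivial
since `t ∈ 𝔭_E^{-m}`. -/

namespace Newforms

variable {E : Type} [Field E]

section Ppow

variable {O : Subring E} {ϖ : E}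

lemma mem_Ppow_zero {x : E} : x ∈ Ppow O ϖ 0 ↔ x ∈ O := by
  simp [Ppow]

lemma zero_mem_Ppow {m : ℤ} : (0 : E) ∈ Ppow O ϖ m :=
  ⟨0, O.zero_mem, by ring⟩

lemma add_mem_Ppow {m : ℤ} {x y : E} (hx : x ∈ Ppow O ϖ m) (hy : y ∈ Ppow O ϖ m) :
    x + y ∈ Ppow O ϖ m := by
  obtain ⟨a, ha, rfl⟩ := hx
  obtain ⟨b, hb, rfl⟩ := hy
  exact ⟨a + b, O.add_mem ha hb, by ring⟩

lemma sum_mem_Ppow {m : ℤ} {ι : Type*} (s : Finset ι) {f : ι → E}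
    (h : ∀ i ∈ s, f i ∈ Ppow O ϖ m) : ∑ i ∈ s, f i ∈ Ppow O ϖ m :=
  Finset.sum_induction f _ (fun _ _ => add_mem_Ppow) zero_mem_Ppow h

lemma mul_mem_Ppow_of_mem {m : ℤ} {c x : E} (hc : c ∈ O) (hx : x ∈ Ppow O ϖ m) :
    c * x ∈ Ppow O ϖ m := by
  obtain ⟨y, hy, rfl⟩ := hx
  exact ⟨c * y, O.mul_mem hc hy, by ring⟩

lemma mul_mem_Ppow_add (hϖ0 : ϖ ≠ 0) {a b : ℤ} {x y : E} (hx : x ∈ Ppow O ϖ a)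
    (hy : y ∈ Ppow O ϖ b) : x * y ∈ Ppow O ϖ (a + b) := by
  obtain ⟨c, hc, rfl⟩ := hx
  obtain ⟨d, hd, rfl⟩ := hy
  exact ⟨c * d, O.mul_mem hc hd, by rw [zpow_add₀ hϖ0]; ring⟩

lemma map_mem_Ppow (σ : E ≃+* E) (hσO : ∀ x ∈ O, σ x ∈ O) (hϖF : σ ϖ = ϖ) {m : ℤ} {x : E}
    (hx : x ∈ Ppow O ϖ m) : σ x ∈ Ppow O ϖ m := by
  obtain ⟨y, hy, rfl⟩ := hx
  exact ⟨σ y, hσO y hy, by rw [map_mul, map_zpow₀, hϖF]⟩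

lemma Ppow_anti (hϖO : ϖ ∈ O) (hϖ0 : ϖ ≠ 0) {a b : ℤ} (hab : b ≤ a) :
    Ppow O ϖ a ⊆ Ppow O ϖ b := by
  rintro _ ⟨y, hy, rfl⟩
  refine ⟨ϖ ^ (a - b).toNat * y, O.mul_mem (O.pow_mem hϖO _) hy, ?_⟩
  rw [← zpow_natCast, Int.toNat_of_nonneg (sub_nonneg.mpr hab), ← mul_assoc, ← zpow_add₀ hϖ0,
    add_sub_cancel]

lemma mul_mem_of_mem_Ppow_neg (hϖ0 : ϖ ≠ 0) {a : ℤ} {t x : E} (ht : t ∈ Ppow O ϖ (-a))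
    (hx : x ∈ Ppow O ϖ a) : t * x ∈ O := by
  simpa [mem_Ppow_zero] using mul_mem_Ppow_add hϖ0 ht hx

end Ppow

section Unitary

variable {n : ℕ} {σ : E ≃+* E} {g : Matrix (Fin (2 * n)) (Fin (2 * n)) E}

def Jsign (E : Type) [Field E] (n : ℕ) (i : Fin (2 * n)) : E :=
  if (i : ℕ) < n then 1 else -1

lemma Jsign_mem (O : Subring E) (i : Fin (2 * n)) : Jsign E n i ∈ O := by
  unfold Jsign; split
  · exact O.one_mem
  · exact O.neg_mem O.one_mem

lemma Jsign_rev (i : Fin (2 * n)) : Jsign E n i.rev = -Jsign E n i := by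
  have := i.isLt
  unfold Jsign
  rw [Fin.val_rev]
  split_ifs <;> first | omega | simp

lemma Jsign_mul_self (i : Fin (2 * n)) : Jsign E n i * Jsign E n i = 1 := by
  unfold Jsign; split <;> norm_num

lemma Jmat_apply (i j : Fin (2 * n)) :
    Jmat E n i j = if j = i.rev then Jsign E n i else 0 := by
  have := i.isLt
  have hrev : j = i.rev ↔ (i : ℕ) + (j : ℕ) + 1 = 2 * n := by
    rw [Fin.ext_iff, Fin.val_rev]; omega
  simp only [Jmat, Jsign, hrev]

lemma Jmat_mul_apply (A : Matrix (Fin (2 * n)) (Fin (2 * n)) E) (i j : Fin (2 * n)) :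
    (Jmat E n * A) i j = Jsign E n i * A i.rev j := by
  simp [Matrix.mul_apply, Jmat_apply, ite_mul]

lemma mul_Jmat_apply (A : Matrix (Fin (2 * n)) (Fin (2 * n)) E) (i j : Fin (2 * n)) :
    (A * Jmat E n) i j = A i j.rev * Jsign E n j.rev := by
  rw [Matrix.mul_apply, Finset.sum_eq_single j.rev]
  · rw [Jmat_apply, Fin.rev_rev, if_pos rfl]
  · intro l _ hl
    rw [Jmat_apply, if_neg fun h => hl (by rw [h, Fin.rev_rev]), mul_zero]
  · simp

lemma Jmat_mul_Jmat : Jmat E n * Jmat E n = -1 := by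
  ext i j
  rw [Jmat_mul_apply, Jmat_apply, Fin.rev_rev, Jsign_rev, Matrix.neg_apply, Matrix.one_apply]
  split_ifs with h h' h'
  · rw [mul_neg, Jsign_mul_self]
  · exact absurd h.symm h'
  · exact absurd h'.symm h
  · simp

lemma neg_Jmat_conj_mul_of_mem_USet (hg : g ∈ USet σ n) :
    -(Jmat E n * (g.map σ)ᵀ * Jmat E n) * g = 1 := by
  rw [Matrix.neg_mul, Matrix.mul_assoc, Matrix.mul_assoc, ← Matrix.mul_assoc _ (Jmat E n),
    show (g.map σ)ᵀ * Jmat E n * g = Jmat E n from hg, Jmat_mul_Jmat, neg_neg]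

lemma inv_eq_of_mem_USet (hg : g ∈ USet σ n) : g⁻¹ = -(Jmat E n * (g.map σ)ᵀ * Jmat E n) :=
  Matrix.inv_eq_left_inv (neg_Jmat_conj_mul_of_mem_USet hg)

lemma inv_mul_of_mem_USet (hg : g ∈ USet σ n) : g⁻¹ * g = 1 := by
  rw [inv_eq_of_mem_USet hg]; exact neg_Jmat_conj_mul_of_mem_USet hg

lemma mul_inv_of_mem_USet (hg : g ∈ USet σ n) : g * g⁻¹ = 1 :=
  mul_eq_one_comm.mp (inv_mul_of_mem_USet hg)

lemma inv_apply_of_mem_USet (hg : g ∈ USet σ n) (i j : Fin (2 * n)) :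
    g⁻¹ i j = Jsign E n i * Jsign E n j * σ (g j.rev i.rev) := by
  rw [inv_eq_of_mem_USet hg, Matrix.neg_apply, mul_Jmat_apply, Jmat_mul_apply, Jsign_rev,
    Matrix.transpose_apply, Matrix.map_apply]
  ring

lemma inv_sub_one_apply_of_mem_USet (hg : g ∈ USet σ n) (i j : Fin (2 * n)) :
    (g⁻¹ - 1) i j = Jsign E n i * Jsign E n j * σ ((g - 1) j.rev i.rev) := by
  rw [Matrix.sub_apply, Matrix.sub_apply, inv_apply_of_mem_USet hg, map_sub, mul_sub,
    Matrix.one_apply, Matrix.one_apply]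
  by_cases h : i = j
  · rw [if_pos h, if_pos (congrArg Fin.rev h.symm), h, Jsign_mul_self, map_one, mul_one]
  · rw [if_neg h, if_neg fun h' => h (Fin.rev_injective h').symm, map_zero, mul_zero]

end Unitary

section KW

variable {O : Subring E} {ϖ : E} {k m : ℕ}

lemma rev_idx0 : (idx0 k).rev = idxLast k := by
  ext; simp [idx0, idxLast]

lemma rev_idxLast : (idxLast k).rev = idx0 k := by
  rw [← rev_idx0, Fin.rev_rev]

lemma KWshape_col_mem (hϖO : ϖ ∈ O) (hϖ0 : ϖ ≠ 0)
    {g : Matrix (Fin (2 * (k + 1))) (Fin (2 * (k + 1))) E}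
    (hg : g ∈ KWshape O ϖ (k + 1) m) (j : Fin (2 * (k + 1))) :
    (g - 1) j (idx0 k) ∈ Ppow O ϖ m := by
  obtain ⟨-, hsh⟩ := hg
  rw [Matrix.sub_apply, Matrix.one_apply]
  by_cases hj0 : j = idx0 k
  · rw [if_pos hj0, hj0]
    exact (hsh _ _).1 ⟨rfl, rfl⟩
  · have hj : (j : ℕ) ≠ 0 := fun h => hj0 (Fin.ext h)
    rw [if_neg hj0, sub_zero]
    by_cases hjl : (j : ℕ) = 2 * (k + 1) - 1
    · exact Ppow_anti hϖO hϖ0 (by omega) ((hsh j _).2.2.1 ⟨hjl, rfl⟩)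
    · exact (hsh j _).2.1 ⟨by omega, by omega, rfl⟩

lemma KWshape_row_mem (hϖO : ϖ ∈ O) (hϖ0 : ϖ ≠ 0)
    {g : Matrix (Fin (2 * (k + 1))) (Fin (2 * (k + 1))) E}
    (hg : g ∈ KWshape O ϖ (k + 1) m) (l : Fin (2 * (k + 1))) :
    (g - 1) (idxLast k) l ∈ Ppow O ϖ m := by
  obtain ⟨-, hsh⟩ := hg
  have hlast : ((idxLast k : Fin (2 * (k + 1))) : ℕ) = 2 * (k + 1) - 1 := by
    simp [idxLast]; omega
  rw [Matrix.sub_apply, Matrix.one_apply]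
  by_cases hll : idxLast k = l
  · rw [if_pos hll, ← hll]
    exact (hsh _ _).2.2.2.2 ⟨hlast, hlast⟩
  · have hl : (l : ℕ) ≠ 2 * (k + 1) - 1 := fun h => hll (Fin.ext (hlast.trans h.symm))
    rw [if_neg hll, sub_zero]
    by_cases hl0 : (l : ℕ) = 0
    · exact Ppow_anti hϖO hϖ0 (by omega) ((hsh _ l).2.2.1 ⟨hlast, hl0⟩)
    · exact (hsh _ l).2.2.2.1 ⟨hlast, by omega, by omega⟩

lemma KWshape_corner_mem {g : Matrix (Fin (2 * (k + 1))) (Fin (2 * (k + 1))) E}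
    (hg : g ∈ KWshape O ϖ (k + 1) m) :
    (g - 1) (idxLast k) (idx0 k) ∈ Ppow O ϖ (2 * m) := by
  rw [Matrix.sub_apply, Matrix.one_apply_ne (by simp [idx0, idxLast, Fin.ext_iff]), sub_zero]
  exact (hg.2 _ _).2.2.1 ⟨by simp [idxLast]; omega, rfl⟩

variable {σ : E ≃+* E}

lemma inv_sub_one_mem_Ppow_of_mem_USet (hσO : ∀ x ∈ O, σ x ∈ O) (hϖF : σ ϖ = ϖ) {n : ℕ}
    {g : Matrix (Fin (2 * n)) (Fin (2 * n)) E}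
    (hg : g ∈ USet σ n) {a : ℤ} {i j : Fin (2 * n)} (hgij : (g - 1) j.rev i.rev ∈ Ppow O ϖ a) :
    (g⁻¹ - 1) i j ∈ Ppow O ϖ a := by
  rw [inv_sub_one_apply_of_mem_USet hg]
  exact mul_mem_Ppow_of_mem (O.mul_mem (Jsign_mem O i) (Jsign_mem O j))
    (map_mem_Ppow σ hσO hϖF hgij)

lemma inv_mem_of_mem_KW (hσO : ∀ x ∈ O, σ x ∈ O)
    {g : Matrix (Fin (2 * (k + 1))) (Fin (2 * (k + 1))) E} (hg : g ∈ KW σ O ϖ (k + 1) m)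
    (i j : Fin (2 * (k + 1))) : g⁻¹ i j ∈ O := by
  rw [inv_apply_of_mem_USet hg.2]
  exact O.mul_mem (O.mul_mem (Jsign_mem O i) (Jsign_mem O j)) (hσO _ (hg.1.1 _ _))

lemma inv_col_mem_of_mem_KW (hσO : ∀ x ∈ O, σ x ∈ O) (hϖF : σ ϖ = ϖ) (hϖO : ϖ ∈ O)
    (hϖ0 : ϖ ≠ 0) {g : Matrix (Fin (2 * (k + 1))) (Fin (2 * (k + 1))) E}
    (hg : g ∈ KW σ O ϖ (k + 1) m) (j : Fin (2 * (k + 1))) :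
    (g⁻¹ - 1) j (idx0 k) ∈ Ppow O ϖ m :=
  inv_sub_one_mem_Ppow_of_mem_USet hσO hϖF hg.2 <| by
    rw [rev_idx0]; exact KWshape_row_mem hϖO hϖ0 hg.1 _

lemma inv_row_mem_of_mem_KW (hσO : ∀ x ∈ O, σ x ∈ O) (hϖF : σ ϖ = ϖ) (hϖO : ϖ ∈ O)
    (hϖ0 : ϖ ≠ 0) {g : Matrix (Fin (2 * (k + 1))) (Fin (2 * (k + 1))) E}
    (hg : g ∈ KW σ O ϖ (k + 1) m) (l : Fin (2 * (k + 1))) :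
    (g⁻¹ - 1) (idxLast k) l ∈ Ppow O ϖ m :=
  inv_sub_one_mem_Ppow_of_mem_USet hσO hϖF hg.2 <| by
    rw [rev_idxLast]; exact KWshape_col_mem hϖO hϖ0 hg.1 _

lemma inv_corner_mem_of_mem_KW (hσO : ∀ x ∈ O, σ x ∈ O) (hϖF : σ ϖ = ϖ)
    {g : Matrix (Fin (2 * (k + 1))) (Fin (2 * (k + 1))) E} (hg : g ∈ KW σ O ϖ (k + 1) m) :
    (g⁻¹ - 1) (idxLast k) (idx0 k) ∈ Ppow O ϖ (2 * m) :=
  inv_sub_one_mem_Ppow_of_mem_USet hσO hϖF hg.2 <| by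
    rw [rev_idxLast, rev_idx0]; exact KWshape_corner_mem hg.1

end KW

section LatticeModel

variable {n : ℕ} {σ : E ≃+* E} {O : Subring E} {ϖ : E} {ψ : E → ℂ}

def e0Index (n : ℕ) : Fin (2 * n + 1) := ⟨n, by omega⟩

lemma e0tensor_apply (w : Fin (2 * n) → E) (i : Fin (2 * n + 1)) (j : Fin (2 * n)) :
    e0tensor n w i j = if i = e0Index n then w j else 0 := by
  simp [e0tensor, e0Index, Fin.ext_iff]

lemma rev_e0Index : (e0Index n).rev = e0Index n := by
  ext; simp [e0Index]; omega

lemma e0tensor_single_mul_apply (t : E) (j0 : Fin (2 * n))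
    (M : Matrix (Fin (2 * n)) (Fin (2 * n)) E) (i : Fin (2 * n + 1)) (j : Fin (2 * n)) :
    (t • e0tensor n (Pi.single j0 (1 : E)) * M) i j = if (i : ℕ) = n then t * M j0 j else 0 := by
  split_ifs with hi <;> simp [Matrix.mul_apply, e0tensor, hi, Pi.single_apply]

lemma formVW_e0tensor_single (T : Matrix (Fin (2 * n + 1)) (Fin (2 * n)) E) (t : E)
    (j0 : Fin (2 * n)) :
    formVW σ n T (t • e0tensor n (Pi.single j0 (1 : E))) =
      σ (T (e0Index n) j0.rev) * t * Jsign E n j0.rev := by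
  change ∑ i, ∑ j, σ (T i j) * _ * Jsign E n j = _
  simp [e0tensor_apply, Fin.rev_eq_iff, rev_e0Index, Pi.single_apply]

lemma mul_transpose_sub_eq (u X : Matrix (Fin (2 * n + 1)) (Fin (2 * n)) E)
    (h : Matrix (Fin (2 * n)) (Fin (2 * n)) E) :
    u * hᵀ - X = (u - X) * hᵀ + X * (h - 1)ᵀ := by
  rw [Matrix.transpose_sub, Matrix.transpose_one, Matrix.mul_sub, Matrix.mul_one, Matrix.sub_mul]
  abel

lemma mul_transpose_sub_e0tensor_mem (hϖ0 : ϖ ≠ 0) {m : ℤ} {t : E} (ht : t ∈ Ppow O ϖ (-m))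
    {j0 : Fin (2 * n)} {h : Matrix (Fin (2 * n)) (Fin (2 * n)) E} (hO : ∀ i j, h i j ∈ O)
    (hcol : ∀ j, (h - 1) j j0 ∈ Ppow O ϖ m) {u : Matrix (Fin (2 * n + 1)) (Fin (2 * n)) E}
    (hu : ∀ i j, (u - t • e0tensor n (Pi.single j0 (1 : E))) i j ∈ O) (i : Fin (2 * n + 1))
    (j : Fin (2 * n)) :
    (u * hᵀ - t • e0tensor n (Pi.single j0 (1 : E))) i j ∈ O := by
  rw [mul_transpose_sub_eq, Matrix.add_apply, e0tensor_single_mul_apply, Matrix.mul_apply]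
  refine O.add_mem (O.sum_mem fun l _ => O.mul_mem (hu i l) (hO j l)) ?_
  split_ifs
  · exact mul_mem_of_mem_Ppow_neg hϖ0 ht (hcol j)
  · exact O.zero_mem

lemma formVW_mul_transpose_sub_e0tensor_sub_mem (hσO : ∀ x ∈ O, σ x ∈ O) (hϖ0 : ϖ ≠ 0)
    (hϖF : σ ϖ = ϖ) {m : ℤ} {t : E} (ht : t ∈ Ppow O ϖ (-m)) {j0 : Fin (2 * n)}
    {h : Matrix (Fin (2 * n)) (Fin (2 * n)) E} (hrow : ∀ l, (h - 1) j0.rev l ∈ Ppow O ϖ m)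
    (hcorner : (h - 1) j0.rev j0 ∈ Ppow O ϖ (2 * m))
    {u : Matrix (Fin (2 * n + 1)) (Fin (2 * n)) E}
    (hu : ∀ i j, (u - t • e0tensor n (Pi.single j0 (1 : E))) i j ∈ O) :
    formVW σ n (u * hᵀ - t • e0tensor n (Pi.single j0 (1 : E))) (t • e0tensor n (Pi.single j0 1))
      - formVW σ n (u - t • e0tensor n (Pi.single j0 (1 : E))) (t • e0tensor n (Pi.single j0 1))
      ∈ O := by
  set X := t • e0tensor n (Pi.single j0 (1 : E))
  have hdiff : (u * hᵀ - X) - (u - X) = (u - X) * (h - 1)ᵀ + X * (h - 1)ᵀ := by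
    rw [Matrix.transpose_sub, Matrix.transpose_one, Matrix.mul_sub, Matrix.mul_sub,
      Matrix.mul_one, Matrix.mul_one, Matrix.sub_mul]
    abel
  rw [formVW_e0tensor_single, formVW_e0tensor_single, ← sub_mul, ← sub_mul, ← map_sub,
    ← Matrix.sub_apply, hdiff, Matrix.add_apply, e0tensor_single_mul_apply,
    if_pos (show (e0Index n : ℕ) = n from rfl), Matrix.mul_apply, map_add, add_mul]
  refine O.mul_mem (O.add_mem ?_ ?_) (Jsign_mem O _)
  · have hsum : ∑ l, (u - X) (e0Index n) l * (h - 1)ᵀ l j0.rev ∈ Ppow O ϖ m :=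
      sum_mem_Ppow _ fun l _ => mul_mem_Ppow_of_mem (hu _ l) (hrow l)
    rw [mul_comm]
    exact mul_mem_of_mem_Ppow_neg hϖ0 ht (map_mem_Ppow σ hσO hϖF hsum)
  · have hprod := mul_mem_Ppow_add hϖ0 ht
      (mul_mem_Ppow_add hϖ0 (map_mem_Ppow σ hσO hϖF ht) (map_mem_Ppow σ hσO hϖF hcorner))
    rw [show -m + (-m + 2 * m) = 0 by ring, mem_Ppow_zero] at hprod
    rw [map_mul]
    convert hprod using 1
    simp only [Matrix.transpose_apply]
    ring

lemma psi_neg_half_trace_eq (hσinv : ∀ x, σ (σ x) = x) (hσO : ∀ x ∈ O, σ x ∈ O)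
    (hodd : (2 : E)⁻¹ ∈ O) (hψadd : ∀ x y : E, σ x = x → σ y = y → ψ (x + y) = ψ x * ψ y)
    (hψO : ∀ x : E, σ x = x → x ∈ O → ψ x = 1) {x y : E} (hxy : x - y ∈ O) :
    ψ (-(x + σ x) / 2) = ψ (-(y + σ y) / 2) := by
  have hfix : ∀ z, σ (-(z + σ z) / 2) = -(z + σ z) / 2 := fun z => by
    rw [map_div₀, map_neg, map_add, hσinv, map_ofNat, add_comm]
  have hsplit : -(x + σ x) / 2 = -(y + σ y) / 2 + -((x - y) + σ (x - y)) / 2 := by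
    rw [map_sub]; ring
  have hmem : -((x - y) + σ (x - y)) / 2 ∈ O := by
    rw [div_eq_mul_inv]
    exact O.mul_mem (O.neg_mem (O.add_mem hxy (hσO _ hxy))) hodd
  rw [hsplit, hψadd _ _ (hfix y) (hfix (x - y)), hψO _ (hfix (x - y)) hmem, mul_one]

theorem phiTW_single_mul_transpose (hσinv : ∀ x, σ (σ x) = x) (hσO : ∀ x ∈ O, σ x ∈ O)
    (hϖ0 : ϖ ≠ 0) (hϖF : σ ϖ = ϖ) (hodd : (2 : E)⁻¹ ∈ O)
    (hψadd : ∀ x y : E, σ x = x → σ y = y → ψ (x + y) = ψ x * ψ y)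
    (hψO : ∀ x : E, σ x = x → x ∈ O → ψ x = 1) {m : ℤ} {t : E} (ht : t ∈ Ppow O ϖ (-m))
    {j0 : Fin (2 * n)} {h h' : Matrix (Fin (2 * n)) (Fin (2 * n)) E} (hh' : h' * h = 1)
    (hO : ∀ i j, h i j ∈ O) (h'O : ∀ i j, h' i j ∈ O)
    (hcol : ∀ j, (h - 1) j j0 ∈ Ppow O ϖ m) (h'col : ∀ j, (h' - 1) j j0 ∈ Ppow O ϖ m)
    (hrow : ∀ l, (h - 1) j0.rev l ∈ Ppow O ϖ m) (hcorner : (h - 1) j0.rev j0 ∈ Ppow O ϖ (2 * m))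
    (u : Matrix (Fin (2 * n + 1)) (Fin (2 * n)) E) :
    phiTW σ O ψ n t (Pi.single j0 1) (u * hᵀ) = phiTW σ O ψ n t (Pi.single j0 1) u := by
  have hback : u * hᵀ * h'ᵀ = u := by
    rw [Matrix.mul_assoc, ← Matrix.transpose_mul, hh', Matrix.transpose_one, Matrix.mul_one]
  unfold phiTW
  by_cases hu : ∀ i j, (u - t • e0tensor n (Pi.single j0 (1 : E))) i j ∈ O
  · rw [if_pos (mul_transpose_sub_e0tensor_mem hϖ0 ht hO hcol hu), if_pos hu]
    exact psi_neg_half_trace_eq hσinv hσO hodd hψadd hψO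
      (formVW_mul_transpose_sub_e0tensor_sub_mem hσO hϖ0 hϖF ht hrow hcorner hu)
  · refine (if_neg fun hu' => hu ?_).trans (if_neg hu).symm
    simpa only [hback] using mul_transpose_sub_e0tensor_mem hϖ0 ht h'O h'col hu'

end LatticeModel

lemma ite_val_eq_pi_single {N : ℕ} (a : Fin N) {c : ℕ} (ha : (a : ℕ) = c) :
    (fun j : Fin N => if (j : ℕ) = c then (1 : E) else 0) = Pi.single a 1 := by
  funext j
  simp [Pi.single_apply, Fin.ext_iff, ha]

theorem statement13_general (E : Type) [Field E]
    (σ : E ≃+* E) (hσinv : ∀ x, σ (σ x) = x)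
    (O : Subring E) (hσO : ∀ x ∈ O, σ x ∈ O)
    (ϖ : E) (hϖO : ϖ ∈ O) (hϖ0 : ϖ ≠ 0) (hϖF : σ ϖ = ϖ)
    (hodd : (2 : E)⁻¹ ∈ O)
    (ψ : E → ℂ) (hψadd : ∀ x y : E, σ x = x → σ y = y → ψ (x + y) = ψ x * ψ y)
    (hψO : ∀ x : E, σ x = x → x ∈ O → ψ x = 1)
    (n m : ℕ) (hn : 1 ≤ n)
    (t : E) (ht : t ∈ Ppow O ϖ (-(m : ℤ))) :
    -- (i) k' ∈ K_{2m}^W fixes φ_{t,f_n}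
    (∀ k' ∈ KW σ O ϖ n m, ∀ u : Matrix (Fin (2 * n + 1)) (Fin (2 * n)) E,
      phiTW σ O ψ n t (fun j => if (j : ℕ) = 0 then 1 else 0) (u * (k'⁻¹)ᵀ) =
        phiTW σ O ψ n t (fun j => if (j : ℕ) = 0 then 1 else 0) u) ∧
    -- (ii) k' ∈ ᵗK_{2m}^W fixes φ_{t,f_{-n}}
    (∀ k' : Matrix (Fin (2 * n)) (Fin (2 * n)) E, (∃ g ∈ KW σ O ϖ n m, k' = gᵀ) →
      ∀ u : Matrix (Fin (2 * n + 1)) (Fin (2 * n)) E,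
        phiTW σ O ψ n t (fun j => if (j : ℕ) = 2 * n - 1 then 1 else 0) (u * (k'⁻¹)ᵀ) =
          phiTW σ O ψ n t (fun j => if (j : ℕ) = 2 * n - 1 then 1 else 0) u) := by
  obtain ⟨k, rfl⟩ : ∃ k, n = k + 1 := ⟨n - 1, by omega⟩
  have hinvT : ∀ A : Matrix (Fin (2 * (k + 1))) (Fin (2 * (k + 1))) E, Aᵀ - 1 = (A - 1)ᵀ := by
    simp
  refine ⟨fun g hg u => ?_, ?_⟩
  · rw [ite_val_eq_pi_single (c := 0) (idx0 k) rfl]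
    refine phiTW_single_mul_transpose hσinv hσO hϖ0 hϖF hodd hψadd hψO ht
      (mul_inv_of_mem_USet hg.2) (inv_mem_of_mem_KW hσO hg) hg.1.1
      (inv_col_mem_of_mem_KW hσO hϖF hϖO hϖ0 hg) (KWshape_col_mem hϖO hϖ0 hg.1)
      ?_ ?_ u
    · rw [rev_idx0]; exact inv_row_mem_of_mem_KW hσO hϖF hϖO hϖ0 hg
    · rw [rev_idx0]; exact inv_corner_mem_of_mem_KW hσO hϖF hg
  · rintro _ ⟨g, hg, rfl⟩ u
    rw [ite_val_eq_pi_single (c := 2 * (k + 1) - 1) (idxLast k) (by simp [idxLast]; omega),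
      ← Matrix.transpose_nonsing_inv]
    refine phiTW_single_mul_transpose hσinv hσO hϖ0 hϖF hodd hψadd hψO ht
      (h := g⁻¹ᵀ) (h' := gᵀ)
      (by rw [← Matrix.transpose_mul, inv_mul_of_mem_USet hg.2, Matrix.transpose_one])
      (fun i j => inv_mem_of_mem_KW hσO hg j i) (fun i j => hg.1.1 j i) (fun j => ?_)
      (fun j => ?_) (fun l => ?_) ?_ u <;> rw [hinvT]
    · exact inv_row_mem_of_mem_KW hσO hϖF hϖO hϖ0 hg j
    · exact KWshape_row_mem hϖO hϖ0 hg.1 j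
    · rw [rev_idxLast]; exact inv_col_mem_of_mem_KW hσO hϖF hϖO hϖ0 hg l
    · rw [rev_idxLast]; exact inv_corner_mem_of_mem_KW hσO hϖF hg

/-- For `n ≥ 1`, even `2m > 0`, `t ∈ E^×` with `t ∈ 𝔭_E^{-m}`, and `k'`
acting on `𝕎` through the `W`-factor: (i) if `k' ∈ K_{2m}^W` then `φ_{t,f_n}` is invariant
under `k'`; (ii) if `k' ∈ ᵗK_{2m}^W` then `φ_{t,f_{-n}}` is invariant under `k'`. -/
theorem statement13 (E : Type) [Field E] [CharZero E]
    (σ : E ≃+* E) (hσinv : ∀ x, σ (σ x) = x) (hσne : σ ≠ RingEquiv.refl E)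
    (O : Subring E) (hval : ∀ x : E, x ∈ O ∨ x⁻¹ ∈ O) (hσO : ∀ x ∈ O, σ x ∈ O)
    (ϖ : E) (hϖO : ϖ ∈ O) (hϖ0 : ϖ ≠ 0) (hϖnu : ϖ⁻¹ ∉ O)
    (hϖgen : ∀ x ∈ O, x⁻¹ ∉ O → x ∈ Ppow O ϖ 1) (hϖF : σ ϖ = ϖ)
    (hodd : (2 : E)⁻¹ ∈ O)
    (ψ : E → ℂ) (hψadd : ∀ x y : E, σ x = x → σ y = y → ψ (x + y) = ψ x * ψ y)
    (hψO : ∀ x : E, σ x = x → x ∈ O → ψ x = 1)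
    (hψnt : ∃ x : E, σ x = x ∧ ϖ * x ∈ O ∧ ψ x ≠ 1)
    (n m : ℕ) (hn : 1 ≤ n) (hm : 1 ≤ m)
    (t : E) (ht0 : t ≠ 0) (ht : t ∈ Ppow O ϖ (-(m : ℤ))) :
    -- (i) k' ∈ K_{2m}^W fixes φ_{t,f_n}
    (∀ k' ∈ KW σ O ϖ n m, ∀ u : Matrix (Fin (2 * n + 1)) (Fin (2 * n)) E,
      phiTW σ O ψ n t (fun j => if (j : ℕ) = 0 then 1 else 0) (u * (k'⁻¹)ᵀ) =
        phiTW σ O ψ n t (fun j => if (j : ℕ) = 0 then 1 else 0) u) ∧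
    -- (ii) k' ∈ ᵗK_{2m}^W fixes φ_{t,f_{-n}}
    (∀ k' : Matrix (Fin (2 * n)) (Fin (2 * n)) E, (∃ g ∈ KW σ O ϖ n m, k' = gᵀ) →
      ∀ u : Matrix (Fin (2 * n + 1)) (Fin (2 * n)) E,
        phiTW σ O ψ n t (fun j => if (j : ℕ) = 2 * n - 1 then 1 else 0) (u * (k'⁻¹)ᵀ) =
          phiTW σ O ψ n t (fun j => if (j : ℕ) = 2 * n - 1 then 1 else 0) u) :=
  statement13_general E σ hσinv O hσO ϖ hϖO hϖ0 hϖF hodd ψ hψadd hψO n m hn t ht
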